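/- arXiv:1706.01147 — 3 statements merged into one kernel-verified Lean document; each statement's English description precedes it below -/
import Mathlib

section
/- Fix k ≥ 3. Let t be any formal term built from a single k-ary operation symbol w and variables, say with m variable slots, and let x₁,…,xₘ and y₁,…,yₘ be variables with xᵢ ≠ yᵢ for every i. Then the identity t(x₁,…,xₘ) ≈ t(y₁,…,yₘ) is not a consequence of the k-wnu identities; that is, there is an algebra with one k-ary operation satisfying the k-wnu identities and an assignment of variables under which the two sides evaluate differently. -/
/-!
Work in the algebra of `k`-wnu normal forms under `wAK`, ordered by the subterm relation `SubK`.
Each entry of `a` lies below `wAK a`, and unless `b` is constant, `wAK b = w(c)` where `c` has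
exactly the entries of `b`. Hence `wAK a ⪯ wAK b` forces `aᵢ ⪯ bᵢ` for some `i`: a strict
relation passes below some `cⱼ = bᵢ`, and an equality between non-constant tuples makes `a` and
`b` agree at some coordinate, because for `k ≥ 3` an odd-one-out tuple is determined by its value
up to the position of the odd entry. Thus coordinatewise incomparability is preserved by every
term operation; distinct variables are incomparable, so the two sides are too, and differ.
-/

/-- Formal terms built from variables in `V` and a single `k`-ary operation symbol `w`. -/
inductive TermK (k : ℕ) (V : Type) : Type
  | var : V → TermK k V
  | w : (Fin k → TermK k V) → TermK k V

/-- Evaluation of a term in an algebra `(B, f)` under a variable assignment `σ`. -/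
def TermK.eval {k : ℕ} {V B : Type} (f : (Fin k → B) → B) (σ : V → B) : TermK k V → B
  | .var v => σ v
  | .w ts => f (fun i => (ts i).eval f σ)

/-- Renaming/substitution of variables in a term. -/
def TermK.rename {k : ℕ} {V V' : Type} (ρ : V → V') : TermK k V → TermK k V'
  | .var v => .var (ρ v)
  | .w ts => .w (fun i => (ts i).rename ρ)

/-- A `k`-ary operation `f` satisfies the `k`-wnu identities: `f(x,…,x) = x` and
the value of `f` on a tuple with a single `y` among `x`'s does not depend on the
position of the `y`. -/
def IsKWNU {k : ℕ} {B : Type} (f : (Fin k → B) → B) : Prop :=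
  (∀ x, f (fun _ => x) = x) ∧
  ∀ (x y : B) (i j : Fin k),
    f (Function.update (fun _ => x) i y) = f (Function.update (fun _ => x) j y)

/-- Two terms are equal modulo the equational theory generated by the `k`-wnu identities,
i.e. they evaluate equally in every algebra satisfying the `k`-wnu identities. -/
def EqWnuK {k : ℕ} {V : Type} (t s : TermK k V) : Prop :=
  ∀ (B : Type) (f : (Fin k → B) → B) (σ : V → B), IsKWNU f → t.eval f σ = s.eval f σ

/-- The set `Aₖ` of `k`-wnu normal forms (over the countably infinite variable set `ℕ`):
every variable is a normal form, and `w(a₁,…,aₖ)` is a normal form whenever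
`a₁,…,aₖ` are normal forms and there are two distinct indices `i, j` with
`a₁ ≠ aᵢ` and `a₁ ≠ aⱼ`. -/
inductive IsNFK {k : ℕ} [NeZero k] : TermK k ℕ → Prop
  | var (n : ℕ) : IsNFK (.var n)
  | w (ts : Fin k → TermK k ℕ) : (∀ i, IsNFK (ts i)) →
      (∃ i j : Fin k, i ≠ j ∧ ts 0 ≠ ts i ∧ ts 0 ≠ ts j) → IsNFK (.w ts)

open Classical in
/-- The normal-form operation `w^A` on `k`-ary terms:
`w^A(a,…,a) = a`; if some coordinate is `c` and all the others equal `d ≠ c` then the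
value is `w(c,d,…,d)`; otherwise `w^A(a₁,…,aₖ) = w(a₁,…,aₖ)`. -/
noncomputable def wAK {k : ℕ} [NeZero k] (ts : Fin k → TermK k ℕ) : TermK k ℕ :=
  if ∀ i, ts i = ts 0 then ts 0
  else if h : ∃ icd : Fin k × TermK k ℕ × TermK k ℕ,
      icd.2.1 ≠ icd.2.2 ∧ ∀ j, ts j = if j = icd.1 then icd.2.1 else icd.2.2 then
    TermK.w (fun l => if l = 0 then h.choose.2.1 else h.choose.2.2)
  else TermK.w ts

/-- The subterm relation `⪯` on `k`-wnu normal forms: the reflexive transitive closure of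
`{(a,b) : a,b ∈ Aₖ, ∃ c₁,…,cₖ ∈ Aₖ, b = w(c₁,…,cₖ) ∧ a ∈ {c₁,…,cₖ}}`. -/
def SubK {k : ℕ} [NeZero k] (a b : TermK k ℕ) : Prop :=
  Relation.ReflTransGen
    (fun s t => IsNFK s ∧ IsNFK t ∧ ∃ cs : Fin k → TermK k ℕ,
      (∀ i, IsNFK (cs i)) ∧ t = .w cs ∧ ∃ i, s = cs i) a b

section WnuNormalForms

variable {k : ℕ}

open Function

lemma Fin.exists_ne_ne (hk : 3 ≤ k) (i j : Fin k) : ∃ l, l ≠ i ∧ l ≠ j := by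
  by_contra! h
  have h0 := h ⟨0, by omega⟩
  have h1 := h ⟨1, by omega⟩
  have h2 := h ⟨2, by omega⟩
  simp only [ne_eq, Fin.ext_iff] at h0 h1 h2
  omega

lemma range_update_const {ι α : Type*} [DecidableEq ι] [Nontrivial ι] (i : ι) (c d : α) :
    Set.range (update (fun _ : ι => d) i c) = {c, d} := by
  obtain ⟨l, hli⟩ := exists_ne i
  ext z
  simp only [Set.mem_range, Set.mem_insert_iff, Set.mem_singleton_iff, update_apply]
  constructor
  · rintro ⟨j, rfl⟩
    split_ifs <;> simp
  · rintro (rfl | rfl)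
    · exact ⟨i, if_pos rfl⟩
    · exact ⟨l, if_neg hli⟩

lemma update_const_ne_const {ι α : Type*} [DecidableEq ι] [Nontrivial ι] {c d : α}
    (hcd : c ≠ d) (i j₀ : ι) :
    ¬ ∀ j, update (fun _ : ι => d) i c j = update (fun _ => d) i c j₀ := by
  intro h
  obtain ⟨l, hli⟩ := exists_ne i
  have := (h i).trans (h l).symm
  simp only [update_self, ne_eq, hli, not_false_eq_true, update_of_ne] at this
  exact hcd this

lemma eq_of_update_const_eq {α : Type*} (hk : 3 ≤ k) {c d c' d' : α} (hcd : c ≠ d)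
    {i i' : Fin k} (h : update (fun _ : Fin k => d) i c = update (fun _ => d') i' c') :
    c = c' ∧ d = d' := by
  obtain ⟨l, hli, hli'⟩ := Fin.exists_ne_ne hk i i'
  have hd : d = d' := by simpa [hli, hli'] using congrFun h l
  refine ⟨?_, hd⟩
  have hi := congrFun h i
  rw [update_self, update_apply] at hi
  split_ifs at hi
  · exact hi
  · exact absurd (hi.trans hd.symm) hcd

/-- The tuples on which `wAK` forgets the position of the odd entry. -/
def IsOddOneOut {α : Type*} (ts : Fin k → α) : Prop :=
  ∃ i c d, c ≠ d ∧ ts = update (fun _ => d) i c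

lemma isOddOneOut_iff {α : Type*} (ts : Fin k → α) :
    IsOddOneOut ts ↔ ∃ icd : Fin k × α × α,
      icd.2.1 ≠ icd.2.2 ∧ ∀ j, ts j = if j = icd.1 then icd.2.1 else icd.2.2 := by
  simp only [IsOddOneOut, funext_iff, update_apply, Prod.exists]

variable [NeZero k]

lemma wAK_of_forall_eq {ts : Fin k → TermK k ℕ} (h : ∀ i, ts i = ts 0) : wAK ts = ts 0 := by
  rw [wAK, if_pos h]

lemma wAK_update (hk : 3 ≤ k) {c d : TermK k ℕ} (hcd : c ≠ d) (i : Fin k) :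
    wAK (update (fun _ => d) i c) = .w (update (fun _ => d) 0 c) := by
  have : Nontrivial (Fin k) := Fin.nontrivial_iff_two_le.mpr (by omega)
  have hodd : IsOddOneOut (update (fun _ : Fin k => d) i c) := ⟨i, c, d, hcd, rfl⟩
  rw [isOddOneOut_iff] at hodd
  rw [wAK, if_neg (update_const_ne_const hcd i 0), dif_pos hodd]
  obtain ⟨-, hspec⟩ := hodd.choose_spec
  obtain ⟨hc, hd⟩ := eq_of_update_const_eq hk hcd (i' := hodd.choose.1)
    (funext fun j => by rw [hspec j, update_apply])
  congr 1
  funext l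
  rw [update_apply, ← hc, ← hd]

lemma wAK_of_not_isOddOneOut {ts : Fin k → TermK k ℕ} (hconst : ¬ ∀ i, ts i = ts 0)
    (hodd : ¬ IsOddOneOut ts) : wAK ts = .w ts := by
  rw [isOddOneOut_iff] at hodd
  rw [wAK, if_neg hconst, dif_neg hodd]

lemma isKWNU_wAK (hk : 3 ≤ k) : IsKWNU (wAK (k := k)) := by
  refine ⟨fun x => wAK_of_forall_eq fun _ => rfl, fun x y i j => ?_⟩
  rcases eq_or_ne y x with rfl | hyx
  · simp
  · rw [wAK_update hk hyx, wAK_update hk hyx]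

lemma isNFK_w_update (hk : 3 ≤ k) {c d : TermK k ℕ} (hcd : c ≠ d) (hc : IsNFK c)
    (hd : IsNFK d) : IsNFK (.w (update (fun _ => d) 0 c)) := by
  have h1 : (⟨1, by omega⟩ : Fin k) ≠ 0 := by simp [Fin.ext_iff]
  have h2 : (⟨2, by omega⟩ : Fin k) ≠ 0 := by simp [Fin.ext_iff]
  refine .w _ (fun j => ?_) ⟨⟨1, by omega⟩, ⟨2, by omega⟩, by simp [Fin.ext_iff], ?_, ?_⟩
  · rw [update_apply]
    split_ifs
    exacts [hc, hd]
  · simpa [h1] using hcd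
  · simpa [h2] using hcd

lemma isNFK_wAK (hk : 3 ≤ k) {ts : Fin k → TermK k ℕ} (h : ∀ i, IsNFK (ts i)) :
    IsNFK (wAK ts) := by
  by_cases hconst : ∀ i, ts i = ts 0
  · rw [wAK_of_forall_eq hconst]
    exact h 0
  by_cases hodd : IsOddOneOut ts
  · obtain ⟨i, c, d, hcd, rfl⟩ := hodd
    obtain ⟨l, hli, -⟩ := Fin.exists_ne_ne hk i i
    rw [wAK_update hk hcd i]
    exact isNFK_w_update hk hcd (by simpa using h i) (by simpa [hli] using h l)
  · rw [wAK_of_not_isOddOneOut hconst hodd]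
    push Not at hconst
    obtain ⟨i, hi⟩ := hconst
    obtain ⟨j, hji, hj⟩ : ∃ j, j ≠ i ∧ ts j ≠ ts 0 := by
      by_contra! hcon
      refine hodd ⟨i, ts i, ts 0, hi, funext fun j => ?_⟩
      by_cases hj : j = i
      · simp [hj]
      · simp [hj, hcon j hj]
    exact .w ts h ⟨i, j, hji.symm, Ne.symm hi, Ne.symm hj⟩

lemma exists_wAK_eq_w_range_eq (hk : 3 ≤ k) {ts : Fin k → TermK k ℕ}
    (hconst : ¬ ∀ i, ts i = ts 0) :
    ∃ cs, wAK ts = .w cs ∧ Set.range cs = Set.range ts := by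
  by_cases hodd : IsOddOneOut ts
  · have : Nontrivial (Fin k) := Fin.nontrivial_iff_two_le.mpr (by omega)
    obtain ⟨i, c, d, hcd, rfl⟩ := hodd
    exact ⟨_, wAK_update hk hcd i, by rw [range_update_const, range_update_const]⟩
  · exact ⟨ts, wAK_of_not_isOddOneOut hconst hodd, rfl⟩

lemma exists_eq_of_wAK_eq (hk : 3 ≤ k) {a b : Fin k → TermK k ℕ}
    (ha : ¬ ∀ i, a i = a 0) (hb : ¬ ∀ i, b i = b 0) (h : wAK a = wAK b) : ∃ l, a l = b l := by
  by_cases hao : IsOddOneOut a <;> by_cases hbo : IsOddOneOut b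
  · obtain ⟨i, c, d, hcd, rfl⟩ := hao
    obtain ⟨i', c', d', hcd', rfl⟩ := hbo
    rw [wAK_update hk hcd, wAK_update hk hcd'] at h
    obtain ⟨-, hd⟩ := eq_of_update_const_eq hk hcd (TermK.w.inj h)
    obtain ⟨l, hli, hli'⟩ := Fin.exists_ne_ne hk i i'
    exact ⟨l, by simp [hli, hli', hd]⟩
  · obtain ⟨i, c, d, hcd, rfl⟩ := hao
    rw [wAK_update hk hcd, wAK_of_not_isOddOneOut hb hbo] at h
    exact absurd ⟨0, c, d, hcd, (TermK.w.inj h).symm⟩ hbo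
  · obtain ⟨i, c, d, hcd, rfl⟩ := hbo
    rw [wAK_update hk hcd, wAK_of_not_isOddOneOut ha hao] at h
    exact absurd ⟨0, c, d, hcd, TermK.w.inj h⟩ hao
  · rw [wAK_of_not_isOddOneOut ha hao, wAK_of_not_isOddOneOut hb hbo] at h
    exact ⟨0, congrFun (TermK.w.inj h) 0⟩

instance : Std.Refl (SubK (k := k)) := ⟨fun _ => .refl⟩

lemma subK_w_arg {cs : Fin k → TermK k ℕ} (hcs : ∀ i, IsNFK (cs i)) (hw : IsNFK (.w cs))
    (i : Fin k) : SubK (cs i) (.w cs) :=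
  .single ⟨hcs i, hw, cs, hcs, rfl, i, rfl⟩

lemma eq_or_exists_subK_of_subK_w {a : TermK k ℕ} {cs : Fin k → TermK k ℕ}
    (h : SubK a (.w cs)) : a = .w cs ∨ ∃ i, SubK a (cs i) := by
  rcases h.cases_tail with h | ⟨c, hac, -, -, cs', -, hcs', i, rfl⟩
  · exact .inl h.symm
  · cases hcs'
    exact .inr ⟨i, hac⟩

lemma eq_var_of_subK_var {a : TermK k ℕ} {n : ℕ} (h : SubK a (.var n)) : a = .var n := by
  rcases h.cases_tail with h | ⟨c, -, -, -, cs', -, hcs', -⟩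
  · exact h.symm
  · cases hcs'

lemma subK_wAK (hk : 3 ≤ k) {ts : Fin k → TermK k ℕ} (h : ∀ i, IsNFK (ts i)) (i : Fin k) :
    SubK (ts i) (wAK ts) := by
  by_cases hconst : ∀ i, ts i = ts 0
  · rw [wAK_of_forall_eq hconst, ← hconst i]
    exact .refl
  obtain ⟨cs, hw, hrange⟩ := exists_wAK_eq_w_range_eq hk hconst
  have hcs : ∀ l, IsNFK (cs l) := fun l => by
    obtain ⟨j, hj⟩ : cs l ∈ Set.range ts := hrange ▸ ⟨l, rfl⟩
    exact hj ▸ h j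
  obtain ⟨l, hl⟩ : ts i ∈ Set.range cs := hrange ▸ ⟨i, rfl⟩
  rw [← hl, hw]
  exact subK_w_arg hcs (hw ▸ isNFK_wAK hk h) l

lemma not_subK_wAK (hk : 3 ≤ k) {a b : Fin k → TermK k ℕ} (ha : ∀ i, IsNFK (a i))
    (hb : ∀ i, IsNFK (b i)) (hab : ∀ i, IncompRel SubK (a i) (b i)) :
    ¬ SubK (wAK a) (wAK b) := by
  intro hAB
  by_cases hbconst : ∀ i, b i = b 0
  · rw [wAK_of_forall_eq hbconst] at hAB
    exact (hab 0).1 ((subK_wAK hk ha 0).trans hAB)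
  obtain ⟨cs, hw, hrange⟩ := exists_wAK_eq_w_range_eq hk hbconst
  rcases eq_or_exists_subK_of_subK_w (hw ▸ hAB) with heq | ⟨l, hsub⟩
  · rw [← hw] at heq
    by_cases haconst : ∀ i, a i = a 0
    · rw [wAK_of_forall_eq haconst] at heq
      exact (hab 0).2 (heq ▸ subK_wAK hk hb 0)
    · obtain ⟨l, hl⟩ := exists_eq_of_wAK_eq hk haconst hbconst heq
      exact (hab l).ne hl
  · obtain ⟨j, hj⟩ : cs l ∈ Set.range b := hrange ▸ ⟨l, rfl⟩
    exact (hab j).1 ((subK_wAK hk ha j).trans (hj ▸ hsub))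

lemma isNFK_eval (hk : 3 ≤ k) {V : Type} (t : TermK k V) {σ : V → TermK k ℕ}
    (hσ : ∀ v, IsNFK (σ v)) : IsNFK (t.eval wAK σ) := by
  induction t with
  | var v => exact hσ v
  | w ts ih => exact isNFK_wAK hk ih

lemma incompRel_subK_eval (hk : 3 ≤ k) {V : Type} (t : TermK k V) {σ τ : V → TermK k ℕ}
    (hσ : ∀ v, IsNFK (σ v)) (hτ : ∀ v, IsNFK (τ v)) (h : ∀ v, IncompRel SubK (σ v) (τ v)) :
    IncompRel SubK (t.eval wAK σ) (t.eval wAK τ) := by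
  induction t with
  | var v => exact h v
  | w ts ih =>
    have hσ' i := isNFK_eval hk (ts i) hσ
    have hτ' i := isNFK_eval hk (ts i) hτ
    exact ⟨not_subK_wAK hk hσ' hτ' ih, not_subK_wAK hk hτ' hσ' fun i => (ih i).symm⟩

end WnuNormalForms

lemma TermK.eval_rename {k : ℕ} {V V' B : Type} (f : (Fin k → B) → B) (σ : V' → B)
    (ρ : V → V') (t : TermK k V) : (t.rename ρ).eval f σ = t.eval f (σ ∘ ρ) := by
  induction t with
  | var v => rfl
  | w ts ih => simp only [TermK.rename, TermK.eval, ih]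

/-- Fix `k ≥ 3`. For any formal term `t` built from a single `k`-ary
operation symbol `w`, with `m` variable slots, and variables `x₁,…,xₘ`, `y₁,…,yₘ` with
`xᵢ ≠ yᵢ` for every `i`, the identity `t(x₁,…,xₘ) ≈ t(y₁,…,yₘ)` is not a consequence of
the `k`-wnu identities: there is an algebra with one `k`-ary operation satisfying the
`k`-wnu identities and an assignment of variables under which the two sides
evaluate differently. -/
theorem statement14 {k : ℕ} (hk : 3 ≤ k) {m : ℕ} (t : TermK k (Fin m))
    (x y : Fin m → ℕ) (hxy : ∀ i, x i ≠ y i) :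
    ∃ (B : Type) (f : (Fin k → B) → B) (σ : ℕ → B),
      IsKWNU f ∧ (t.rename x).eval f σ ≠ (t.rename y).eval f σ := by
  have : NeZero k := ⟨by omega⟩
  refine ⟨TermK k ℕ, wAK, .var, isKWNU_wAK hk, ?_⟩
  have hvar (i : Fin m) : IncompRel SubK (.var (x i) : TermK k ℕ) (.var (y i)) :=
    ⟨fun h => hxy i (TermK.var.inj (eq_var_of_subK_var h)),
      fun h => hxy i (TermK.var.inj (eq_var_of_subK_var h)).symm⟩
  rw [TermK.eval_rename, TermK.eval_rename]
  exact (incompRel_subK_eval hk t (fun _ => .var _) (fun _ => .var _) hvar).ne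
end

section
/- Fix k ≥ 3. Every formal term built from the variables X and the k-ary symbol w is equal, modulo the equational theory generated by the k-wnu identities, to a unique element of Aₖ; consequently (Aₖ, w^A) is the free X-generated algebra in the variety defined by the k-wnu identities. -/
lemma exists_third {k : ℕ} (hk : 3 ≤ k) (i i' : Fin k) : ∃ j : Fin k, j ≠ i ∧ j ≠ i' := by
  by_contra h
  push_neg at h
  have hsub : (Finset.univ : Finset (Fin k)) ⊆ {i, i'} := by
    intro j _
    by_cases h1 : j = i
    · simp [h1]
    · simp [h j h1]
  have hc := Finset.card_le_card hsub
  have h2 : ({i, i'} : Finset (Fin k)).card ≤ 2 := by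
    refine (Finset.card_insert_le _ _).trans ?_
    simp
  simp [Finset.card_univ] at hc
  omega

lemma pattern_unique {T : Type} {k : ℕ} (hk : 3 ≤ k) {ts : Fin k → T}
    {i i' : Fin k} {c d c' d' : T} (hcd : c ≠ d) (hcd' : c' ≠ d')
    (h1 : ∀ j, ts j = if j = i then c else d)
    (h2 : ∀ j, ts j = if j = i' then c' else d') : i' = i ∧ c' = c ∧ d' = d := by
  by_cases hii : i = i'
  · subst hii
    obtain ⟨j, hj, -⟩ := exists_third hk i i
    have e1 : c' = c := by
      have := (h2 i).symm.trans (h1 i); simpa using this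
    have e2 : d' = d := by
      have := (h2 j).symm.trans (h1 j); simpa [hj] using this
    exact ⟨rfl, e1, e2⟩
  · exfalso
    obtain ⟨j, hj1, hj2⟩ := exists_third hk i i'
    have e1 : d' = c := by
      have := (h2 i).symm.trans (h1 i)
      simpa [fun h : i = i' => hii h] using this
    have e2 : d' = d := by
      have := (h2 j).symm.trans (h1 j)
      simpa [hj1, hj2] using this
    exact hcd (e1 ▸ e2)

lemma wAK_pattern {k : ℕ} [NeZero k] (hk : 3 ≤ k) {ts : Fin k → TermK k ℕ}
    {i : Fin k} {c d : TermK k ℕ} (hcd : c ≠ d) (hts : ∀ j, ts j = if j = i then c else d) :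
    wAK ts = TermK.w (fun l => if l = 0 then c else d) := by
  have hne : ¬ ∀ j, ts j = ts 0 := by
    intro hall
    obtain ⟨j, hj, -⟩ := exists_third hk i i
    have e1 : ts i = c := by rw [hts i, if_pos rfl]
    have e2 : ts j = d := by rw [hts j, if_neg hj]
    have : ts i = ts j := (hall i).trans (hall j).symm
    rw [e1, e2] at this
    exact hcd this
  have hex : ∃ icd : Fin k × TermK k ℕ × TermK k ℕ,
      icd.2.1 ≠ icd.2.2 ∧ ∀ j, ts j = if j = icd.1 then icd.2.1 else icd.2.2 :=
    ⟨(i, c, d), hcd, hts⟩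
  rw [wAK, if_neg hne, dif_pos hex]
  obtain ⟨hcd', hts'⟩ := hex.choose_spec
  obtain ⟨-, hc, hd⟩ := pattern_unique hk hcd hcd' hts hts'
  congr 1
  funext l
  by_cases hl : l = 0 <;> simp [hl, hc, hd]

lemma wAK_wnu {k : ℕ} [NeZero k] (hk : 3 ≤ k) : IsKWNU (wAK (k := k)) := by
  constructor
  · intro x
    rw [wAK, if_pos (fun _ => rfl)]
  · intro x y i j
    by_cases hxy : y = x
    · subst hxy
      have h1 : Function.update (fun _ : Fin k => y) i y = fun _ => y := by
        funext l; simp [Function.update_apply]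
      have h2 : Function.update (fun _ : Fin k => y) j y = fun _ => y := by
        funext l; simp [Function.update_apply]
      rw [h1, h2]
    · have h1 : ∀ l, Function.update (fun _ : Fin k => x) i y l = if l = i then y else x :=
        fun l => Function.update_apply _ _ _ _
      have h2 : ∀ l, Function.update (fun _ : Fin k => x) j y l = if l = j then y else x :=
        fun l => Function.update_apply _ _ _ _
      rw [wAK_pattern hk hxy h1, wAK_pattern hk hxy h2]

lemma eval_wAK {k : ℕ} [NeZero k] {B : Type} {f : (Fin k → B) → B} (hf : IsKWNU f)
    (σ : ℕ → B) (cs : Fin k → TermK k ℕ) :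
    (wAK cs).eval f σ = f (fun i => (cs i).eval f σ) := by
  rw [wAK]
  split_ifs with h1 h2
  · have e : (fun i => (cs i).eval f σ) = fun _ => (cs 0).eval f σ := by
      funext i; rw [h1 i]
    rw [e, hf.1]
  · obtain ⟨hcd, hts⟩ := h2.choose_spec
    simp only [TermK.eval]
    have e1 : (fun l => TermK.eval f σ (if l = 0 then h2.choose.2.1 else h2.choose.2.2)) =
        Function.update (fun _ : Fin k => h2.choose.2.2.eval f σ) 0 (h2.choose.2.1.eval f σ) := by
      funext l
      by_cases hl : l = 0 <;> simp [hl, Function.update_apply]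
    have e2 : (fun l => (cs l).eval f σ) =
        Function.update (fun _ : Fin k => h2.choose.2.2.eval f σ) h2.choose.1
          (h2.choose.2.1.eval f σ) := by
      funext l
      rw [hts l]
      by_cases hl : l = h2.choose.1 <;> simp [hl, Function.update_apply]
    rw [e1, e2]
    exact hf.2 _ _ 0 h2.choose.1
  · rfl

lemma eqwnu_nfof {k : ℕ} [NeZero k] (t : TermK k ℕ) :
    EqWnuK t (t.eval wAK TermK.var) := by
  induction t with
  | var v => intro B f σ hf; rfl
  | w ts ih =>
    intro B f σ hf
    have e : (TermK.w ts).eval wAK TermK.var = wAK (fun i => (ts i).eval wAK TermK.var) := rfl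
    rw [e, eval_wAK hf]
    simp only [TermK.eval]
    congr 1
    funext i
    exact ih i B f σ hf

lemma isNF_wAK {k : ℕ} [NeZero k] (hk : 3 ≤ k) (cs : Fin k → TermK k ℕ)
    (h : ∀ i, IsNFK (cs i)) : IsNFK (wAK cs) := by
  rw [wAK]
  split_ifs with h1 h2
  · exact h 0
  · obtain ⟨hcd, hts⟩ := h2.choose_spec
    refine IsNFK.w _ (fun l => ?_) ?_
    · by_cases hl : l = 0
      · rw [if_pos hl]
        have e : cs h2.choose.1 = h2.choose.2.1 := by rw [hts h2.choose.1, if_pos rfl]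
        exact e ▸ h h2.choose.1
      · rw [if_neg hl]
        obtain ⟨j, hj, -⟩ := exists_third hk h2.choose.1 h2.choose.1
        have e : cs j = h2.choose.2.2 := by rw [hts j, if_neg hj]
        exact e ▸ h j
    · have one_lt : (1:ℕ) < k := by omega
      have two_lt : (2:ℕ) < k := by omega
      refine ⟨⟨1, one_lt⟩, ⟨2, two_lt⟩, ?_, ?_, ?_⟩
      · intro hcon
        have := congrArg Fin.val hcon
        simp at this
      · simpa [Fin.ext_iff] using hcd
      · simpa [Fin.ext_iff] using hcd
  · refine IsNFK.w _ h ?_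
    push_neg at h1
    obtain ⟨i0, hi0⟩ := h1
    by_cases hex : ∃ i1, i1 ≠ i0 ∧ cs i1 ≠ cs 0
    · obtain ⟨i1, hne, h1'⟩ := hex
      exact ⟨i0, i1, Ne.symm hne, Ne.symm hi0, Ne.symm h1'⟩
    · exfalso
      apply h2
      push_neg at hex
      refine ⟨(i0, cs i0, cs 0), hi0, fun j => ?_⟩
      by_cases hj : j = i0
      · simp [hj]
      · simp [hj, hex j hj]

lemma isNF_nfof {k : ℕ} [NeZero k] (hk : 3 ≤ k) (t : TermK k ℕ) :
    IsNFK (t.eval wAK TermK.var) := by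
  induction t with
  | var v => exact IsNFK.var v
  | w ts ih => exact isNF_wAK hk _ ih

lemma nfof_fixed {k : ℕ} [NeZero k] (hk : 3 ≤ k) {t : TermK k ℕ} (h : IsNFK t) :
    t.eval wAK TermK.var = t := by
  induction h with
  | var n => rfl
  | w ts hts hcond ih =>
    have e : (TermK.w ts).eval wAK TermK.var = wAK ts := by
      show wAK (fun i => (ts i).eval wAK TermK.var) = wAK ts
      congr 1; funext i; exact ih i
    rw [e]
    obtain ⟨i, j, hij, h0i, h0j⟩ := hcond
    rw [wAK]
    split_ifs with h1 h2
    · exact absurd (h1 i).symm h0i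
    · obtain ⟨hcd, hp⟩ := h2.choose_spec
      have hi0 : h2.choose.1 = 0 := by
        by_contra hne
        have ht0 : ts 0 = h2.choose.2.2 := by
          rw [hp 0, if_neg (fun hc => hne hc.symm)]
        have heqi : i = h2.choose.1 := by
          by_contra hci
          apply h0i
          rw [ht0, hp i, if_neg hci]
        have heqj : j = h2.choose.1 := by
          by_contra hcj
          apply h0j
          rw [ht0, hp j, if_neg hcj]
        exact hij (heqi.trans heqj.symm)
      congr 1
      funext l
      rw [hp l, hi0]
    · rfl

/-- Fix `k ≥ 3`. Every formal term built from the variables and the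
`k`-ary symbol `w` is equal, modulo the equational theory generated by the `k`-wnu
identities, to a unique element of `Aₖ`; consequently `(Aₖ, w^A)` is the free algebra in
the variety defined by the `k`-wnu identities: two terms are equal modulo the theory
iff they evaluate equally in `(Aₖ, w^A)` under the identity assignment of variables. -/
theorem statement16 {k : ℕ} [NeZero k] (hk : 3 ≤ k) :
    (∀ t : TermK k ℕ, ∃! t' : TermK k ℕ, IsNFK t' ∧ EqWnuK t t') ∧
    (∀ t s : TermK k ℕ, EqWnuK t s ↔ t.eval wAK TermK.var = s.eval wAK TermK.var) := by
  have hwnu := wAK_wnu (k := k) hk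
  have key : ∀ t s : TermK k ℕ,
      EqWnuK t s ↔ t.eval wAK TermK.var = s.eval wAK TermK.var := by
    intro t s
    constructor
    · intro h; exact h _ _ _ hwnu
    · intro h B f σ hf
      rw [eqwnu_nfof t B f σ hf, eqwnu_nfof s B f σ hf, h]
  refine ⟨fun t => ⟨t.eval wAK TermK.var, ⟨isNF_nfof hk t, eqwnu_nfof t⟩, ?_⟩, key⟩
  rintro y ⟨hy, hty⟩
  have h := (key t y).mp hty
  rw [nfof_fixed hk hy] at h
  exact h.symm
end

section
/- Fix k ≥ 3 and let Rₖ be the subalgebra of (Aₖ, w^A)² generated by {(x,y) : x, y ∈ X, x ≠ y}. Then Rₖ is disjoint from the diagonal: there is no r ∈ Aₖ with (r,r) ∈ Rₖ. -/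
/-- The subalgebra `Rₖ` of `(Aₖ, w^A)²` generated by the pairs of distinct variables:
the smallest set of pairs containing `{(x,y) : x ≠ y}` and closed under the
coordinatewise `k`-ary operation. -/
inductive InRK {k : ℕ} [NeZero k] : TermK k ℕ → TermK k ℕ → Prop
  | gen (x y : ℕ) : x ≠ y → InRK (.var x) (.var y)
  | close (as bs : Fin k → TermK k ℕ) :
      (∀ i, InRK (as i) (bs i)) → InRK (wAK as) (wAK bs)

namespace TermK

variable {k : ℕ} {V : Type}

def IsArg (s t : TermK k V) : Prop :=
  ∃ ts : Fin k → TermK k V, t = .w ts ∧ ∃ i, s = ts i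

def IsSubterm : TermK k V → TermK k V → Prop :=
  Relation.ReflTransGen IsArg

lemma isSubterm_w (ts : Fin k → TermK k V) (i : Fin k) : IsSubterm (ts i) (.w ts) :=
  .single ⟨ts, rfl, i, rfl⟩

lemma IsSubterm.eq_or_of_w {s : TermK k V} {ts : Fin k → TermK k V}
    (h : IsSubterm s (.w ts)) : s = .w ts ∨ ∃ i, IsSubterm s (ts i) := by
  rcases h.cases_tail with rfl | ⟨t, hst, us, hus, i, rfl⟩
  · exact .inl rfl
  · cases hus
    exact .inr ⟨i, hst⟩

lemma IsSubterm.eq_of_var {s : TermK k V} {y : V} (h : IsSubterm s (.var y)) :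
    s = .var y := by
  rcases h.cases_tail with rfl | ⟨t, -, us, hus, -⟩
  · rfl
  · cases hus

lemma incompRel_var {x y : V} (hxy : x ≠ y) :
    IncompRel IsSubterm (.var x : TermK k V) (.var y) :=
  ⟨fun h => hxy (var.inj h.eq_of_var), fun h => hxy (var.inj h.eq_of_var).symm⟩

end TermK

open TermK

section wAK

variable {k : ℕ} [NeZero k]

def IsSingleOdd (ts : Fin k → TermK k ℕ) (i : Fin k) (c d : TermK k ℕ) : Prop :=
  c ≠ d ∧ ∀ j, ts j = if j = i then c else d

lemma wAK_cases (ts : Fin k → TermK k ℕ) :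
    ((∀ i, ts i = ts 0) ∧ wAK ts = ts 0) ∨
    (∃ i c d, IsSingleOdd ts i c d ∧ wAK ts = .w (fun l => if l = 0 then c else d)) ∨
    ((¬ ∃ i c d, IsSingleOdd ts i c d) ∧ wAK ts = .w ts) := by
  classical
  by_cases hc : ∀ i, ts i = ts 0
  · exact .inl ⟨hc, by rw [wAK, if_pos hc]⟩
  by_cases hs : ∃ icd : Fin k × TermK k ℕ × TermK k ℕ,
      icd.2.1 ≠ icd.2.2 ∧ ∀ j, ts j = if j = icd.1 then icd.2.1 else icd.2.2
  · exact .inr (.inl ⟨_, _, _, hs.choose_spec, by rw [wAK, if_neg hc, dif_pos hs]⟩)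
  · refine .inr (.inr ⟨fun ⟨i, c, d, hicd⟩ => hs ⟨(i, c, d), hicd⟩, ?_⟩)
    rw [wAK, if_neg hc, dif_neg hs]

lemma wAK_eq_or_range_eq (hk : 2 ≤ k) (ts : Fin k → TermK k ℕ) :
    ((∀ i, ts i = ts 0) ∧ wAK ts = ts 0) ∨
    ∃ us, wAK ts = .w us ∧ Set.range us = Set.range ts := by
  have : Nontrivial (Fin k) := Fin.nontrivial_iff_two_le.2 hk
  rcases wAK_cases ts with hconst | ⟨i, c, d, ⟨-, hts⟩, hw⟩ | ⟨-, hw⟩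
  · exact .inl hconst
  · refine .inr ⟨_, hw, Set.Subset.antisymm ?_ ?_⟩
    · rintro _ ⟨l, rfl⟩
      obtain ⟨m, hm⟩ := exists_ne i
      by_cases hl : l = 0
      · exact ⟨i, by simp [hts, hl]⟩
      · exact ⟨m, by simp [hts, hl, hm]⟩
    · rintro _ ⟨j, rfl⟩
      obtain ⟨l, hl⟩ := exists_ne (0 : Fin k)
      by_cases hj : j = i
      · exact ⟨0, by simp [hts, hj]⟩
      · exact ⟨l, by simp [hts, hj, hl]⟩
  · exact .inr ⟨ts, hw, rfl⟩

lemma isSubterm_wAK (hk : 2 ≤ k) (ts : Fin k → TermK k ℕ) (j : Fin k) :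
    IsSubterm (ts j) (wAK ts) := by
  rcases wAK_eq_or_range_eq hk ts with ⟨hconst, hw⟩ | ⟨us, hw, hrange⟩
  · rw [hw, hconst j]
    exact .refl
  · obtain ⟨l, hl⟩ : ts j ∈ Set.range us := hrange ▸ Set.mem_range_self j
    rw [hw, ← hl]
    exact isSubterm_w us l

lemma TermK.IsSubterm.eq_or_of_wAK (hk : 2 ≤ k) {s : TermK k ℕ} {ts : Fin k → TermK k ℕ}
    (h : IsSubterm s (wAK ts)) : s = wAK ts ∨ ∃ j, IsSubterm s (ts j) := by
  rcases wAK_eq_or_range_eq hk ts with ⟨-, hw⟩ | ⟨us, hw, hrange⟩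
  · exact .inr ⟨0, hw ▸ h⟩
  · rw [hw] at h ⊢
    rcases h.eq_or_of_w with heq | ⟨l, hl⟩
    · exact .inl heq
    · obtain ⟨j, hj⟩ : us l ∈ Set.range ts := hrange ▸ Set.mem_range_self l
      exact .inr ⟨j, hj ▸ hl⟩

lemma exists_isSubterm_of_wAK_eq (hk : 3 ≤ k) {as bs : Fin k → TermK k ℕ}
    (h : wAK as = wAK bs) : ∃ j, IsSubterm (as j) (bs j) ∨ IsSubterm (bs j) (as j) := by
  have hk2 : 2 ≤ k := by omega
  rcases wAK_cases as with ⟨-, hwa⟩ | ⟨i, c, d, ⟨hcd, hpa⟩, hwa⟩ | ⟨hna, hwa⟩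
  · exact ⟨0, .inr (hwa ▸ h ▸ isSubterm_wAK hk2 bs 0)⟩
  all_goals rcases wAK_cases bs with ⟨-, hwb⟩ | ⟨i', c', d', ⟨hcd', hpb⟩, hwb⟩ | ⟨hnb, hwb⟩
  · exact ⟨0, .inl (hwb ▸ h.symm ▸ isSubterm_wAK hk2 as 0)⟩
  · rw [hwa, hwb, w.injEq] at h
    have : Nontrivial (Fin k) := Fin.nontrivial_iff_two_le.2 hk2
    obtain ⟨l, hl⟩ := exists_ne (0 : Fin k)
    have hdd' : d = d' := by simpa [hl] using congrFun h l
    obtain ⟨j, hji, hji'⟩ := Fin.exists_ne_and_ne_of_two_lt i i' (by omega)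
    have hj : as j = bs j := by rw [hpa, hpb, if_neg hji, if_neg hji', hdd']
    exact ⟨j, .inl (hj ▸ .refl)⟩
  · rw [hwa, hwb, w.injEq] at h
    exact (hnb ⟨0, c, d, hcd, fun j => by rw [← h]⟩).elim
  · exact ⟨0, .inl (hwb ▸ h.symm ▸ isSubterm_wAK hk2 as 0)⟩
  · rw [hwa, hwb, w.injEq] at h
    exact (hna ⟨0, c', d', hcd', fun j => by rw [h]⟩).elim
  · rw [hwa, hwb, w.injEq] at h
    exact ⟨0, .inl (h ▸ .refl)⟩

lemma not_isSubterm_wAK (hk : 3 ≤ k) {as bs : Fin k → TermK k ℕ}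
    (h : ∀ i, IncompRel IsSubterm (as i) (bs i)) : ¬ IsSubterm (wAK as) (wAK bs) := by
  have hk2 : 2 ≤ k := by omega
  intro hab
  rcases hab.eq_or_of_wAK hk2 with heq | ⟨j, hj⟩
  · obtain ⟨j, hj | hj⟩ := exists_isSubterm_of_wAK_eq hk heq
    exacts [(h j).1 hj, (h j).2 hj]
  · exact (h j).1 ((isSubterm_wAK hk2 as j).trans hj)

lemma incompRel_wAK (hk : 3 ≤ k) {as bs : Fin k → TermK k ℕ}
    (h : ∀ i, IncompRel IsSubterm (as i) (bs i)) :
    IncompRel IsSubterm (wAK as) (wAK bs) :=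
  ⟨not_isSubterm_wAK hk h, not_isSubterm_wAK hk fun i => (h i).symm⟩

lemma InRK.incompRel (hk : 3 ≤ k) {a b : TermK k ℕ} (h : InRK a b) :
    IncompRel IsSubterm a b := by
  induction h with
  | gen x y hxy => exact incompRel_var hxy
  | close as bs _ ih => exact incompRel_wAK hk ih

end wAK

/-- Fix `k ≥ 3`. Then `Rₖ` is disjoint from the diagonal: there is no
`r ∈ Aₖ` with `(r,r) ∈ Rₖ`. -/
theorem statement18 {k : ℕ} [NeZero k] (hk : 3 ≤ k) :
    ¬ ∃ r : TermK k ℕ, InRK r r :=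
  fun ⟨_, hr⟩ => (hr.incompRel hk).1 .refl
end
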